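/- arXiv:1610.00960 — 4 statements merged into one kernel-verified Lean document; each statement's English description precedes it below -/
import Mathlib

section
/- Let f = f_0 + ψ where f_0 is convex with L-Lipschitz gradient and ψ is convex lower semicontinuous. Let κ > 0, h(w) = f(w) + (κ/2)‖w−x‖² with minimizer w*, and define w_0 = argmin_w { f_0(x) + ⟨∇f_0(x), w−x⟩ + ((L+κ)/2)‖w−x‖² + ψ(w) } (one proximal-gradient step from x with step 1/(L+κ)). Then h(w_0) − h(w*) ≤ ((L+κ)/(2κ²))‖∇F(x)‖², where ∇F(x) = κ(x − w*). -/
open Set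

section aux

variable {d : ℕ}

local notation "E" => EuclideanSpace ℝ (Fin d)

private lemma line_hasDerivAt (f₀ : E → ℝ) (f₀' : E → E)
    (hdiff : ∀ x, HasGradientAt f₀ (f₀' x) x) (x v : E) (t : ℝ) :
    HasDerivAt (fun s : ℝ => f₀ (x + s • v)) (inner ℝ (f₀' (x + t • v)) v : ℝ) t := by
  have hc : HasDerivAt (fun s : ℝ => x + s • v) v t := by
    simpa using ((hasDerivAt_id t).smul_const v).const_add x
  have hf := (hdiff (x + t • v)).hasFDerivAt
  have := hf.comp_hasDerivAt t hc
  exact this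

private lemma convex_first_order (f₀ : E → ℝ) (hf₀ : ConvexOn ℝ Set.univ f₀)
    (f₀' : E → E) (hdiff : ∀ x, HasGradientAt f₀ (f₀' x) x) (x w : E) :
    f₀ x + (inner ℝ (f₀' x) (w - x) : ℝ) ≤ f₀ w := by
  set v := w - x with hv
  set φ : ℝ → ℝ := fun s => f₀ (x + s • v) with hφ
  have hconv : ConvexOn ℝ Set.univ φ := by
    have hc := hf₀.comp_affineMap (AffineMap.lineMap x w : ℝ →ᵃ[ℝ] E)
    have heq : φ = f₀ ∘ (AffineMap.lineMap x w : ℝ →ᵃ[ℝ] E) := by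
      funext s
      simp [hφ, hv, AffineMap.lineMap_apply, Function.comp, add_comm]
    rw [heq]
    simpa using hc
  have hd : HasDerivAt φ (inner ℝ (f₀' x) v : ℝ) 0 := by
    simpa using line_hasDerivAt f₀ f₀' hdiff x v 0
  have hslope := hconv.le_slope_of_hasDerivAt (mem_univ (0 : ℝ)) (mem_univ (1 : ℝ))
    one_pos hd
  have : (inner ℝ (f₀' x) v : ℝ) ≤ φ 1 - φ 0 := by
    simpa [slope_def_field] using hslope
  have h0 : φ 0 = f₀ x := by simp [hφ]
  have h1 : φ 1 = f₀ w := by simp [hφ, hv]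
  linarith

private lemma descent_lemma (f₀ : E → ℝ)
    (f₀' : E → E) (hdiff : ∀ x, HasGradientAt f₀ (f₀' x) x)
    (L : ℝ) (hL : 0 ≤ L) (hlip : ∀ x y, ‖f₀' x - f₀' y‖ ≤ L * ‖x - y‖) (x w : E) :
    f₀ w ≤ f₀ x + (inner ℝ (f₀' x) (w - x) : ℝ) + L / 2 * ‖w - x‖ ^ 2 := by
  set v := w - x with hv
  set g : ℝ → ℝ := fun s =>
    f₀ (x + s • v) - s * (inner ℝ (f₀' x) v : ℝ) - L * s ^ 2 * ‖v‖ ^ 2 / 2 with hg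
  have hd : ∀ t : ℝ, HasDerivAt g
      ((inner ℝ (f₀' (x + t • v)) v : ℝ) - (inner ℝ (f₀' x) v : ℝ) - L * t * ‖v‖ ^ 2) t := by
    intro t
    have h1 := line_hasDerivAt f₀ f₀' hdiff x v t
    have h2 : HasDerivAt (fun s : ℝ => s * (inner ℝ (f₀' x) v : ℝ))
        (inner ℝ (f₀' x) v : ℝ) t := by
      simpa using (hasDerivAt_id t).mul_const (inner ℝ (f₀' x) v : ℝ)
    have h3 : HasDerivAt (fun s : ℝ => L * s ^ 2 * ‖v‖ ^ 2 / 2)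
        (L * t * ‖v‖ ^ 2) t := by
      have : HasDerivAt (fun s : ℝ => s ^ 2) (2 * t) t := by
        simpa using hasDerivAt_pow 2 t
      have := (((this.const_mul L).mul_const (‖v‖ ^ 2)).div_const 2)
      rw [show L * t * ‖v‖ ^ 2 = L * (2 * t) * ‖v‖ ^ 2 / 2 by ring]
      exact this
    exact (h1.sub h2).sub h3
  have hanti : AntitoneOn g (Icc (0 : ℝ) 1) := by
    apply antitoneOn_of_deriv_nonpos (convex_Icc 0 1)
    · exact fun t _ => ((hd t).continuousAt).continuousWithinAt
    · exact fun t _ => ((hd t).differentiableAt).differentiableWithinAt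
    · intro t ht
      rw [interior_Icc] at ht
      rw [(hd t).deriv]
      have key : (inner ℝ (f₀' (x + t • v) - f₀' x) v : ℝ) ≤ L * t * ‖v‖ ^ 2 := by
        calc (inner ℝ (f₀' (x + t • v) - f₀' x) v : ℝ)
            ≤ ‖f₀' (x + t • v) - f₀' x‖ * ‖v‖ := real_inner_le_norm _ _
          _ ≤ L * ‖(x + t • v) - x‖ * ‖v‖ := by
              gcongr; exact hlip _ _
          _ = L * (|t| * ‖v‖) * ‖v‖ := by rw [add_sub_cancel_left, norm_smul]; simp
          _ = L * |t| * ‖v‖ ^ 2 := by ring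
          _ = L * t * ‖v‖ ^ 2 := by rw [abs_of_pos ht.1]
      rw [inner_sub_left] at key
      linarith
  have h10 : g 1 ≤ g 0 := hanti (by norm_num) (by norm_num) zero_le_one
  have h0 : g 0 = f₀ x := by simp [hg]
  have h1 : g 1 = f₀ w - (inner ℝ (f₀' x) v : ℝ) - L * ‖v‖ ^ 2 / 2 := by
    simp [hg, hv]
  rw [h0, h1] at h10
  have : L * ‖v‖ ^ 2 / 2 = L / 2 * ‖w - x‖ ^ 2 := by rw [hv]; ring
  linarith

end aux

/-- Warm start for primal methods, composite case: after one proximal-gradient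
    step from x with stepsize 1/(L+κ), h(w₀) − h(w*) ≤ ((L+κ)/(2κ²))‖∇F(x)‖². -/
theorem warm_start_composite (d : ℕ)
    (f₀ ψ : EuclideanSpace ℝ (Fin d) → ℝ)
    (hf₀ : ConvexOn ℝ Set.univ f₀)
    (hψ : ConvexOn ℝ Set.univ ψ) (hψlsc : LowerSemicontinuous ψ)
    (f₀' : EuclideanSpace ℝ (Fin d) → EuclideanSpace ℝ (Fin d))
    (hdiff : ∀ x, HasGradientAt f₀ (f₀' x) x)
    (L : ℝ) (hL : 0 ≤ L)
    (hlip : ∀ x y, ‖f₀' x - f₀' y‖ ≤ L * ‖x - y‖)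
    (κ : ℝ) (hκ : 0 < κ)
    (x : EuclideanSpace ℝ (Fin d))
    (h : EuclideanSpace ℝ (Fin d) → ℝ)
    (hh : ∀ w, h w = f₀ w + ψ w + κ / 2 * ‖w - x‖ ^ 2)
    (wstar : EuclideanSpace ℝ (Fin d)) (hwstar : IsMinOn h Set.univ wstar)
    (w₀ : EuclideanSpace ℝ (Fin d))
    (hw₀ : IsMinOn (fun w => f₀ x + (inner ℝ (f₀' x) (w - x) : ℝ)
        + (L + κ) / 2 * ‖w - x‖ ^ 2 + ψ w) Set.univ w₀) :
    h w₀ - h wstar ≤ (L + κ) / (2 * κ ^ 2) * ‖κ • (x - wstar)‖ ^ 2 := by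
  set m : EuclideanSpace ℝ (Fin d) → ℝ := fun w => f₀ x + (inner ℝ (f₀' x) (w - x) : ℝ)
      + (L + κ) / 2 * ‖w - x‖ ^ 2 + ψ w with hm
  -- Step 1: h w₀ ≤ m w₀ via descent lemma
  have step1 : h w₀ ≤ m w₀ := by
    have hd := descent_lemma f₀ f₀' hdiff L hL hlip x w₀
    rw [hh w₀, hm]
    simp only
    nlinarith [sq_nonneg ‖w₀ - x‖]
  -- Step 2: m w₀ ≤ m wstar
  have step2 : m w₀ ≤ m wstar := hw₀ (mem_univ wstar)
  -- Step 3: m wstar ≤ h wstar + L/2 ‖wstar - x‖²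
  have step3 : m wstar ≤ h wstar + L / 2 * ‖wstar - x‖ ^ 2 := by
    have hc := convex_first_order f₀ hf₀ f₀' hdiff x wstar
    rw [hh wstar, hm]
    simp only
    nlinarith [sq_nonneg ‖wstar - x‖]
  -- RHS computation
  have hrhs : (L + κ) / (2 * κ ^ 2) * ‖κ • (x - wstar)‖ ^ 2
      = (L + κ) / 2 * ‖wstar - x‖ ^ 2 := by
    rw [norm_smul, norm_sub_rev]
    have : |κ| = κ := abs_of_pos hκ
    rw [Real.norm_eq_abs, this]
    field_simp
  rw [hrhs]
  have hmono : L / 2 * ‖wstar - x‖ ^ 2 ≤ (L + κ) / 2 * ‖wstar - x‖ ^ 2 := by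
    gcongr
    linarith
  have hchain : h w₀ ≤ h wstar + L / 2 * ‖wstar - x‖ ^ 2 :=
    le_trans (le_trans step1 step2) step3
  linarith
end

section
/- Suppose an optimization method applied to the κ-strongly convex subproblem h produces iterates with h(w_t) − h* ≤ C(1−τ)^t (h(w_0) − h*), where the warm start guarantees h(w_0) − h* ≤ ((L+κ)/(2κ²))‖∇F(x)‖². Then after T = (1/τ) log(74 C (L+κ)/κ) iterations, the iterate z = w_T satisfies h(z) − h* ≤ (1/(72κ))‖g‖², where g = κ(x − z). -/
open Set

set_option maxHeartbeats 1000000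

/-- Inner-loop complexity: a linearly convergent method with the warm-start
    guarantee reaches the adaptive stopping criterion after
    T ≥ (1/τ) log(74 C (L+κ)/κ) iterations. -/
theorem inner_loop_complexity (d : ℕ)
    (h : EuclideanSpace ℝ (Fin d) → ℝ)
    (κ L : ℝ) (hκ : 0 < κ) (hL : 0 ≤ L)
    (x px : EuclideanSpace ℝ (Fin d))
    (hpx : IsMinOn h Set.univ px)
    (hstrong : ∀ z, h px + κ / 2 * ‖z - px‖ ^ 2 ≤ h z)
    (C τ : ℝ) (hC : 0 < C) (hτ0 : 0 < τ) (hτ1 : τ < 1)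
    (w : ℕ → EuclideanSpace ℝ (Fin d))
    (hrate : ∀ t : ℕ, h (w t) - h px ≤ C * (1 - τ) ^ t * (h (w 0) - h px))
    (hwarm : h (w 0) - h px ≤ (L + κ) / (2 * κ ^ 2) * ‖κ • (x - px)‖ ^ 2)
    (T : ℕ) (hT : (1 / τ) * Real.log (74 * C * (L + κ) / κ) ≤ (T : ℝ)) :
    h (w T) - h px ≤ 1 / (72 * κ) * ‖κ • (x - w T)‖ ^ 2 := by
  have hLκ : 0 < L + κ := by linarith
  have hM : 0 < 74 * C * (L + κ) / κ := by positivity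
  set G : ℝ := ‖κ • (x - px)‖ with hGdef
  set a : ℝ := ‖κ • (x - w T)‖ with hadef
  set b : ℝ := κ * ‖w T - px‖ with hbdef
  have hG0 : 0 ≤ G := norm_nonneg _
  have ha0 : 0 ≤ a := norm_nonneg _
  have hb0 : 0 ≤ b := by positivity
  -- triangle inequality
  have hGab : G ≤ a + b := by
    have hsplit : κ • (x - px) = κ • (x - w T) + κ • (w T - px) := by
      rw [← smul_add, sub_add_sub_cancel]
    have hnb : ‖κ • (w T - px)‖ = b := by
      rw [norm_smul, Real.norm_eq_abs, abs_of_pos hκ]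
    calc G = ‖κ • (x - w T) + κ • (w T - px)‖ := by rw [hGdef, hsplit]
      _ ≤ ‖κ • (x - w T)‖ + ‖κ • (w T - px)‖ := norm_add_le _ _
      _ = a + b := by rw [hnb]
  -- strong convexity bound
  have hbsq : b ^ 2 ≤ 2 * κ * (h (w T) - h px) := by
    have := hstrong (w T)
    have hsq : b ^ 2 = κ ^ 2 * ‖w T - px‖ ^ 2 := by rw [hbdef]; ring
    nlinarith [this]
  -- step 1 : decay bound
  have hlog : Real.log (74 * C * (L + κ) / κ) ≤ τ * T := by
    have := mul_le_mul_of_nonneg_left hT hτ0.le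
    have h5 : τ * (1 / τ * Real.log (74 * C * (L + κ) / κ)) =
        Real.log (74 * C * (L + κ) / κ) := by field_simp
    linarith
  have hexp1 : (1 - τ) ^ T ≤ Real.exp (-(τ * T)) := by
    have h2 : 1 - τ ≤ Real.exp (-τ) := by
      have := Real.add_one_le_exp (-τ); linarith
    calc (1 - τ) ^ T ≤ (Real.exp (-τ)) ^ T :=
          pow_le_pow_left₀ (by linarith) h2 T
      _ = Real.exp (-(τ * T)) := by
          rw [← Real.exp_nat_mul]; ring_nf
  have hexp2 : Real.exp (-(τ * T)) ≤ κ / (74 * C * (L + κ)) := by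
    have h3 : Real.exp (-(τ * T)) ≤ Real.exp (-(Real.log (74 * C * (L + κ) / κ))) :=
      Real.exp_le_exp.mpr (by linarith)
    have h4 : Real.exp (-(Real.log (74 * C * (L + κ) / κ))) = κ / (74 * C * (L + κ)) := by
      rw [Real.exp_neg, Real.exp_log hM]
      field_simp
    linarith [h3, h4 ▸ h3]
  have hdecay : C * (1 - τ) ^ T ≤ κ / (74 * (L + κ)) := by
    have : C * (1 - τ) ^ T ≤ C * (κ / (74 * C * (L + κ))) := by
      have := le_trans hexp1 hexp2
      nlinarith [this]
    calc C * (1 - τ) ^ T ≤ C * (κ / (74 * C * (L + κ))) := this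
      _ = κ / (74 * (L + κ)) := by field_simp
  -- step 2 : key bound
  have hD0 : 0 ≤ h (w 0) - h px := by
    have := isMinOn_iff.mp hpx (w 0) (Set.mem_univ _)
    linarith
  have hCt0 : 0 ≤ C * (1 - τ) ^ T := mul_nonneg hC.le (pow_nonneg (by linarith) T)
  have hkey : h (w T) - h px ≤ 1 / (148 * κ) * G ^ 2 := by
    have h1 : h (w T) - h px ≤ C * (1 - τ) ^ T * ((L + κ) / (2 * κ ^ 2) * G ^ 2) := by
      have := hrate T
      nlinarith [mul_le_mul_of_nonneg_left hwarm hCt0]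
    have h2 : C * (1 - τ) ^ T * ((L + κ) / (2 * κ ^ 2) * G ^ 2) ≤
        κ / (74 * (L + κ)) * ((L + κ) / (2 * κ ^ 2) * G ^ 2) := by
      exact mul_le_mul_of_nonneg_right hdecay
        (mul_nonneg (div_nonneg hLκ.le (by positivity)) (sq_nonneg G))
    have h3 : κ / (74 * (L + κ)) * ((L + κ) / (2 * κ ^ 2) * G ^ 2) =
        1 / (148 * κ) * G ^ 2 := by
      field_simp; ring
    linarith
  -- final algebra
  have hGsq : G * G ≤ (a + b) * (a + b) :=
    mul_self_le_mul_self hG0 hGab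
  have hkey' : 148 * κ * (h (w T) - h px) ≤ G ^ 2 := by
    have h6 : 1 / (148 * κ) * G ^ 2 * (148 * κ) = G ^ 2 := by field_simp
    nlinarith [mul_le_mul_of_nonneg_right hkey (by positivity : (0:ℝ) ≤ 148 * κ)]
  have hfin : 72 * κ * (h (w T) - h px) ≤ a ^ 2 := by
    nlinarith [hGsq, hbsq, hkey', sq_nonneg (a - b)]
  have h7 : h (w T) - h px ≤ a ^ 2 / (72 * κ) := by
    rw [le_div_iff₀ (by positivity)]
    nlinarith [hfin]
  have h8 : 1 / (72 * κ) * a ^ 2 = a ^ 2 / (72 * κ) := by ring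
  linarith
end

section
/- Let F be the Moreau envelope of a convex function f with parameter κ, with proximal point p(x) and ∇F(x) = κ(x−p(x)). For any x, if z = x − (1/κ)g with g = κ(x−z) an ε-approximate proximal point (h(z) − h* ≤ ε ≤ (1/(72κ))‖g‖²), then F(z) ≤ f(z) = h(z) − (1/(2κ))‖g‖² ≤ F(x), i.e., the inexact proximal step with zero quasi-Newton correction always satisfies the descent condition. -/
open Set

open RealInnerProductSpace in
/-- The inexact proximal step (zero quasi-Newton correction) satisfies the
    descent condition: F(z) ≤ f(z) = h(z) − (1/(2κ))‖g‖² ≤ F(x). -/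
theorem inexact_prox_step_descent (d : ℕ)
    (f : EuclideanSpace ℝ (Fin d) → ℝ)
    (hf : ConvexOn ℝ Set.univ f) (hcont : Continuous f)
    (κ : ℝ) (hκ : 0 < κ)
    (x : EuclideanSpace ℝ (Fin d))
    (h : EuclideanSpace ℝ (Fin d) → ℝ)
    (hh : ∀ w, h w = f w + κ / 2 * ‖w - x‖ ^ 2)
    (px : EuclideanSpace ℝ (Fin d)) (hpx : IsMinOn h Set.univ px)
    (F : EuclideanSpace ℝ (Fin d) → ℝ)
    (hF : ∀ y, F y = ⨅ w, (f w + κ / 2 * ‖w - y‖ ^ 2))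
    (z : EuclideanSpace ℝ (Fin d))
    (g : EuclideanSpace ℝ (Fin d)) (hg : g = κ • (x - z))
    (ε : ℝ) (hε0 : 0 ≤ ε)
    (hz : h z - h px ≤ ε)
    (hεg : ε ≤ 1 / (72 * κ) * ‖g‖ ^ 2) :
    F z ≤ f z ∧ f z = h z - 1 / (2 * κ) * ‖g‖ ^ 2 ∧
      h z - 1 / (2 * κ) * ‖g‖ ^ 2 ≤ F x := by
  have hmin : ∀ w, h px ≤ h w := fun w => isMinOn_iff.mp hpx w (mem_univ w)
  -- subgradient inequality at px
  have key : ∀ w, 0 ≤ f w - f px + κ * ⟪px - x, w - px⟫ := by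
    intro w
    set a : ℝ := f w - f px + κ * ⟪px - x, w - px⟫ with ha
    set c : ℝ := κ / 2 * ‖w - px‖ ^ 2 with hc
    have hc0 : 0 ≤ c := by positivity
    have step : ∀ t : ℝ, 0 < t → t ≤ 1 → 0 ≤ a + t * c := by
      intro t ht0 ht1
      have hmem := hmin ((1 - t) • px + t • w)
      have hconv := hf.2 (mem_univ px) (mem_univ w) (by linarith : (0:ℝ) ≤ 1 - t)
        (le_of_lt ht0) (by ring)
      have hvec : (1 - t) • px + t • w - x = (px - x) + t • (w - px) := by
        module
      have hnorm : ‖(1 - t) • px + t • w - x‖ ^ 2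
          = ‖px - x‖ ^ 2 + 2 * (t * ⟪px - x, w - px⟫) + t ^ 2 * ‖w - px‖ ^ 2 := by
        rw [hvec, norm_add_sq_real, real_inner_smul_right, norm_smul,
          Real.norm_eq_abs, abs_of_pos ht0, mul_pow]
      rw [hh, hh, hnorm] at hmem
      simp only [smul_eq_mul] at hconv
      have h3 : 0 ≤ t * (a + t * c) := by
        rw [ha, hc]; nlinarith
      by_contra h4
      push_neg at h4
      nlinarith [mul_pos ht0 (by linarith : 0 < -(a + t * c))]
    by_contra hlt
    push_neg at hlt
    have htpos : 0 < -a / (2 * (c + 1)) := div_pos (by linarith) (by linarith)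
    have hstep := step (min 1 (-a / (2 * (c + 1)))) (lt_min one_pos htpos) (min_le_left _ _)
    have h2 : min 1 (-a / (2 * (c + 1))) ≤ -a / (2 * (c + 1)) := min_le_right _ _
    have h5 : min 1 (-a / (2 * (c + 1))) * c ≤ (-a / (2 * (c + 1))) * c :=
      mul_le_mul_of_nonneg_right h2 hc0
    have h6 : (-a / (2 * (c + 1))) * c ≤ -a / 2 := by
      rw [div_mul_eq_mul_div, div_le_div_iff₀ (by linarith) two_pos]
      nlinarith
    linarith
  -- lower bound for the Moreau infimum at z
  set u : EuclideanSpace ℝ (Fin d) := x - px with hu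
  have hbdd : BddBelow (Set.range fun w => f w + κ / 2 * ‖w - z‖ ^ 2) := by
    refine ⟨f px + κ * ⟪u, z - px⟫ - κ / 2 * ‖u‖ ^ 2, ?_⟩
    rintro _ ⟨w, rfl⟩
    have hk := key w
    have hsplit : ⟪px - x, w - px⟫ = -⟪u, w - z⟫ - ⟪u, z - px⟫ := by
      have e1 : (w : EuclideanSpace ℝ (Fin d)) - px = (w - z) + (z - px) := by module
      have e2 : px - x = -u := by rw [hu]; module
      rw [e1, inner_add_right, e2]
      simp only [inner_neg_left]
      ring
    rw [hsplit] at hk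
    have hcs : -(‖u‖ * ‖w - z‖) ≤ ⟪u, w - z⟫ := by
      have := real_inner_le_norm u (-(w - z))
      rw [inner_neg_right, norm_neg] at this
      linarith
    have hsq : 0 ≤ κ / 2 * (‖w - z‖ - ‖u‖) ^ 2 := by positivity
    simp only []
    nlinarith [hk, mul_le_mul_of_nonneg_left hcs (le_of_lt hκ)]
  have part1 : F z ≤ f z := by
    have := ciInf_le hbdd z
    rw [hF z]
    simpa using this
  have hgnorm : ‖g‖ ^ 2 = κ ^ 2 * ‖z - x‖ ^ 2 := by
    rw [hg, norm_smul, Real.norm_eq_abs, abs_of_pos hκ, norm_sub_rev, mul_pow]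
  have part2 : f z = h z - 1 / (2 * κ) * ‖g‖ ^ 2 := by
    have e : 1 / (2 * κ) * (κ ^ 2 * ‖z - x‖ ^ 2) = κ / 2 * ‖z - x‖ ^ 2 := by
      field_simp
    rw [hh z, hgnorm, e]
    ring
  have part3 : h z - 1 / (2 * κ) * ‖g‖ ^ 2 ≤ F x := by
    have hFx : h px ≤ F x := by
      rw [hF x]
      refine le_ciInf fun w => ?_
      rw [← hh w]
      exact hmin w
    have hg2 : 0 ≤ ‖g‖ ^ 2 := sq_nonneg _
    have : 1 / (72 * κ) * ‖g‖ ^ 2 ≤ 1 / (2 * κ) * ‖g‖ ^ 2 := by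
      apply mul_le_mul_of_nonneg_right _ hg2
      apply one_div_le_one_div_of_le (by linarith) (by linarith)
    linarith
  exact ⟨part1, part2, part3⟩
end

section
/- Let F be κ-smooth (∇F is κ-Lipschitz), and suppose x_{k+1} = x_k − A_k g_k where A_k is symmetric positive definite with ((1−α)/κ) I ⪯ A_k ⪯ ((1+α)/κ) I, α ≤ 1/32, and the inexactness satisfies ‖g_k − ∇F(x_k)‖² ≤ 2κε_k with ε_k ≤ (1/(72κ))‖g_k‖², and similarly at x_{k+1}: F_{k+1} ≤ F(x_{k+1}) + ε_{k+1} with ε_{k+1} ≤ (1/(72κ))‖g_{k+1}‖², ‖g_{k+1} − ∇F(x_{k+1})‖² ≤ 2κε_{k+1}. Then F_{k+1} ≤ F_k − (1/(4κ))‖g_k‖², where F_k = h_k(z_k) satisfies f(z_k) = F_k − (1/(2κ))‖g_k‖², z_k = x_k − (1/κ)g_k, and F(z_k) ≤ f(z_k). -/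
open Set

lemma my_descent {d : ℕ} (F : EuclideanSpace ℝ (Fin d) → ℝ)
    (G : EuclideanSpace ℝ (Fin d) → EuclideanSpace ℝ (Fin d))
    (hgrad : ∀ x, HasGradientAt F (G x) x)
    (κ : ℝ) (hκ : 0 < κ)
    (hsmooth : ∀ x y, ‖G x - G y‖ ≤ κ * ‖x - y‖) (x y : EuclideanSpace ℝ (Fin d)) :
    F y ≤ F x + (inner ℝ (G x) (y - x) : ℝ) + κ / 2 * ‖y - x‖ ^ 2 := by
  set v := y - x with hv
  set φ : ℝ → ℝ := fun t => F (x + t • v) - t * (inner ℝ (G x) v : ℝ) - κ * t ^ 2 / 2 * ‖v‖ ^ 2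
    with hφdef
  have hline : ∀ t : ℝ, HasDerivAt (fun t : ℝ => x + t • v) v t := by
    intro t
    simpa using ((hasDerivAt_id t).smul_const v).const_add x
  have hφ : ∀ t : ℝ, HasDerivAt φ
      ((inner ℝ (G (x + t • v)) v : ℝ) - (inner ℝ (G x) v : ℝ) - κ * t * ‖v‖ ^ 2) t := by
    intro t
    have h1 : HasDerivAt (fun t : ℝ => F (x + t • v)) ((inner ℝ (G (x + t • v)) v : ℝ)) t := by
      have := ((hgrad (x + t • v)).hasFDerivAt).comp_hasDerivAt t (hline t)
      simp at this
      exact this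
    have h2 : HasDerivAt (fun t : ℝ => t * (inner ℝ (G x) v : ℝ)) ((inner ℝ (G x) v : ℝ)) t := by
      simpa using (hasDerivAt_id t).mul_const ((inner ℝ (G x) v : ℝ))
    have h3 : HasDerivAt (fun t : ℝ => κ * t ^ 2 / 2 * ‖v‖ ^ 2) (κ * t * ‖v‖ ^ 2) t := by
      have : HasDerivAt (fun t : ℝ => t ^ 2) (2 * t) t := by
        simpa using hasDerivAt_pow 2 t
      have := ((this.const_mul κ).div_const 2).mul_const (‖v‖ ^ 2)
      convert this using 1
      · rfl
      · rfl
      · ring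
    exact (h1.sub h2).sub h3
  have hanti : AntitoneOn φ (Icc (0:ℝ) 1) := by
    apply antitoneOn_of_deriv_nonpos (convex_Icc 0 1)
    · exact fun t _ => ((hφ t).continuousAt).continuousWithinAt
    · intro t ht
      exact ((hφ t).differentiableAt).differentiableWithinAt
    · intro t ht
      rw [interior_Icc] at ht
      rw [(hφ t).deriv]
      have key : (inner ℝ (G (x + t • v)) v : ℝ) - (inner ℝ (G x) v : ℝ)
          = (inner ℝ (G (x + t • v) - G x) v : ℝ) := by
        rw [inner_sub_left]
      rw [key]
      have h1 : (inner ℝ (G (x + t • v) - G x) v : ℝ) ≤ ‖G (x + t • v) - G x‖ * ‖v‖ :=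
        real_inner_le_norm _ _
      have h2 : ‖G (x + t • v) - G x‖ ≤ κ * (t * ‖v‖) := by
        have := hsmooth (x + t • v) x
        simpa [norm_smul, abs_of_pos ht.1] using this
      nlinarith [norm_nonneg v, mul_le_mul_of_nonneg_right h2 (norm_nonneg v), ht.1.le]
  have h01 : φ 1 ≤ φ 0 := hanti (by norm_num) (by norm_num) (by norm_num)
  have e0 : φ 0 = F x := by simp [hφdef]
  have e1 : φ 1 = F y - (inner ℝ (G x) v : ℝ) - κ / 2 * ‖v‖ ^ 2 := by
    have hxy : x + (1:ℝ) • v = y := by rw [hv]; simp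
    rw [hφdef]
    simp only [hxy]
    ring
  rw [e0, e1] at h01
  linarith

lemma my_sa_bound {d : ℕ} (B : EuclideanSpace ℝ (Fin d) →L[ℝ] EuclideanSpace ℝ (Fin d))
    (hB : IsSelfAdjoint B) (C : ℝ) (hC : 0 ≤ C)
    (h : ∀ u, |(inner ℝ u (B u) : ℝ)| ≤ C * ‖u‖ ^ 2) (u : EuclideanSpace ℝ (Fin d)) :
    ‖B u‖ ≤ C * ‖u‖ := by
  rcases eq_or_ne (B u) 0 with h0 | h0
  · rw [h0, norm_zero]; positivity
  have hu : u ≠ 0 := by rintro rfl; simp at h0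
  have hBu : (0:ℝ) < ‖B u‖ := norm_pos_iff.mpr h0
  have hun : (0:ℝ) < ‖u‖ := norm_pos_iff.mpr hu
  set v : EuclideanSpace ℝ (Fin d) := (‖u‖ / ‖B u‖) • B u with hvdef
  have hvn : ‖v‖ = ‖u‖ := by
    rw [hvdef, norm_smul]
    rw [Real.norm_eq_abs, abs_of_pos (by positivity)]
    field_simp
  have hsym := ContinuousLinearMap.isSelfAdjoint_iff_isSymmetric.mp hB
  have hpol : (inner ℝ v (B u) : ℝ) * 4
      = (inner ℝ (u + v) (B (u + v)) : ℝ) - (inner ℝ (u - v) (B (u - v)) : ℝ) := by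
    have hs : (inner ℝ u (B v) : ℝ) = (inner ℝ v (B u) : ℝ) := by
      have h' := hsym u v
      simp only [ContinuousLinearMap.coe_coe] at h'
      rw [← h']; exact real_inner_comm _ _
    simp only [map_add, map_sub, inner_add_left, inner_add_right, inner_sub_left,
      inner_sub_right]
    rw [hs]
    ring
  have hvBu : (inner ℝ v (B u) : ℝ) = ‖u‖ * ‖B u‖ := by
    rw [hvdef, real_inner_smul_left, real_inner_self_eq_norm_sq]
    field_simp
  have h1 := (abs_le.mp (h (u + v))).2
  have h2 := (abs_le.mp (h (u - v))).1
  have hpar : ‖u + v‖ ^ 2 + ‖u - v‖ ^ 2 = 2 * (‖u‖ ^ 2 + ‖v‖ ^ 2) := by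
    rw [norm_add_sq_real, norm_sub_sq_real]; ring
  have key : ‖u‖ * ‖B u‖ * 4 ≤ C * (4 * ‖u‖ ^ 2) := by
    rw [← hvBu]
    calc (inner ℝ v (B u) : ℝ) * 4
        = (inner ℝ (u + v) (B (u + v)) : ℝ) - (inner ℝ (u - v) (B (u - v)) : ℝ) := hpol
      _ ≤ C * ‖u + v‖ ^ 2 + C * ‖u - v‖ ^ 2 := by linarith
      _ = C * (‖u + v‖ ^ 2 + ‖u - v‖ ^ 2) := by ring
      _ = C * (2 * (‖u‖ ^ 2 + ‖v‖ ^ 2)) := by rw [hpar]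
      _ = C * (4 * ‖u‖ ^ 2) := by rw [hvn]; ring
  nlinarith

set_option maxHeartbeats 2000000

/-- Sufficient condition for the descent condition: a quasi-Newton step with a
    metric A_k close enough to (1/κ)I and sub-problems solved to accuracy
    ε ≤ (1/(72κ))‖g‖² satisfies F_{k+1} ≤ F_k − (1/(4κ))‖g_k‖². -/
theorem sufficient_descent_condition (d : ℕ)
    (F : EuclideanSpace ℝ (Fin d) → ℝ)
    (G : EuclideanSpace ℝ (Fin d) → EuclideanSpace ℝ (Fin d))
    (hgrad : ∀ x, HasGradientAt F (G x) x)
    (κ : ℝ) (hκ : 0 < κ)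
    (hsmooth : ∀ x y, ‖G x - G y‖ ≤ κ * ‖x - y‖)
    (α : ℝ) (hα0 : 0 ≤ α) (hα : α ≤ 1 / 32)
    (A : EuclideanSpace ℝ (Fin d) →L[ℝ] EuclideanSpace ℝ (Fin d))
    (hAsa : IsSelfAdjoint A)
    (hAlb : ∀ u, (1 - α) / κ * ‖u‖ ^ 2 ≤ (inner ℝ u (A u) : ℝ))
    (hAub : ∀ u, (inner ℝ u (A u) : ℝ) ≤ (1 + α) / κ * ‖u‖ ^ 2)
    (xk xk1 zk : EuclideanSpace ℝ (Fin d))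
    (gk gk1 : EuclideanSpace ℝ (Fin d))
    (Fk Fk1 εk εk1 : ℝ) (hεk0 : 0 ≤ εk) (hεk10 : 0 ≤ εk1)
    (hstep : xk1 = xk - A gk)
    (hzk : zk = xk - (1 / κ) • gk)
    (hgk_err : ‖gk - G xk‖ ^ 2 ≤ 2 * κ * εk)
    (hεk : εk ≤ 1 / (72 * κ) * ‖gk‖ ^ 2)
    (hFk_lb : F xk ≤ Fk) (hFk_ub : Fk ≤ F xk + εk)
    (hfzk : F zk ≤ Fk - 1 / (2 * κ) * ‖gk‖ ^ 2)
    (hgk1_err : ‖gk1 - G xk1‖ ^ 2 ≤ 2 * κ * εk1)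
    (hεk1 : εk1 ≤ 1 / (72 * κ) * ‖gk1‖ ^ 2)
    (hFk1_lb : F xk1 ≤ Fk1) (hFk1_ub : Fk1 ≤ F xk1 + εk1) :
    Fk1 ≤ Fk - 1 / (4 * κ) * ‖gk‖ ^ 2 := by
  have hg0 : (0:ℝ) ≤ ‖gk‖ := norm_nonneg _
  have hκne : κ ≠ 0 := ne_of_gt hκ
  -- gradient error at xk
  have hδ : ‖gk - G xk‖ ≤ ‖gk‖ / 6 := by
    have h1 : ‖gk - G xk‖ ^ 2 ≤ ‖gk‖ ^ 2 / 36 := by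
      have h2 : 2 * κ * εk ≤ 2 * κ * (1 / (72 * κ) * ‖gk‖ ^ 2) := by nlinarith
      have h3 : 2 * κ * (1 / (72 * κ) * ‖gk‖ ^ 2) = ‖gk‖ ^ 2 / 36 := by
        field_simp; ring
      linarith [hgk_err]
    nlinarith [norm_nonneg (gk - G xk)]
  have hGxk : ‖G xk‖ ≤ 7 / 6 * ‖gk‖ := by
    have : ‖G xk‖ ≤ ‖gk‖ + ‖gk - G xk‖ := by
      have h : G xk = gk - (gk - G xk) := by abel
      calc ‖G xk‖ = ‖gk - (gk - G xk)‖ := by rw [← h]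
        _ ≤ ‖gk‖ + ‖gk - G xk‖ := norm_sub_le _ _
    linarith
  -- distance between zk and xk
  have hzx : ‖zk - xk‖ = 1 / κ * ‖gk‖ := by
    rw [hzk]
    have : xk - (1 / κ) • gk - xk = -((1 / κ) • gk) := by abel
    rw [this, norm_neg, norm_smul, Real.norm_eq_abs, abs_of_pos (by positivity)]
  have hGzk : ‖G zk‖ ≤ 13 / 6 * ‖gk‖ := by
    have h1 : ‖G zk - G xk‖ ≤ κ * ‖zk - xk‖ := hsmooth zk xk
    have h2 : κ * ‖zk - xk‖ = ‖gk‖ := by rw [hzx]; field_simp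
    have h3 : ‖G zk‖ ≤ ‖G xk‖ + ‖G zk - G xk‖ := by
      have h : G zk = G xk + (G zk - G xk) := by abel
      calc ‖G zk‖ = ‖G xk + (G zk - G xk)‖ := by rw [← h]
        _ ≤ ‖G xk‖ + ‖G zk - G xk‖ := norm_add_le _ _
    linarith
  -- the perturbation operator B = A - (1/κ) • 1
  set B : EuclideanSpace ℝ (Fin d) →L[ℝ] EuclideanSpace ℝ (Fin d) :=
    A - (1 / κ) • (1 : EuclideanSpace ℝ (Fin d) →L[ℝ] EuclideanSpace ℝ (Fin d)) with hBdef
  have hBsa : IsSelfAdjoint B := by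
    rw [ContinuousLinearMap.isSelfAdjoint_iff_isSymmetric]
    have hAsym := ContinuousLinearMap.isSelfAdjoint_iff_isSymmetric.mp hAsa
    intro u v
    have h1 := hAsym u v
    simp only [ContinuousLinearMap.coe_coe] at h1 ⊢
    have happu : B u = A u - (1 / κ) • u := by
      simp [hBdef, ContinuousLinearMap.sub_apply]
    have happv : B v = A v - (1 / κ) • v := by
      simp [hBdef, ContinuousLinearMap.sub_apply]
    rw [happu, happv, inner_sub_left, inner_sub_right, real_inner_smul_left,
      real_inner_smul_right, h1]
  have hBbound : ∀ u, |(inner ℝ u (B u) : ℝ)| ≤ α / κ * ‖u‖ ^ 2 := by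
    intro u
    have happ : B u = A u - (1 / κ) • u := by
      simp [hBdef, ContinuousLinearMap.sub_apply]
    rw [happ, abs_le]
    rw [inner_sub_right, real_inner_smul_right, real_inner_self_eq_norm_sq]
    constructor
    · have := hAlb u
      have heq : (1 - α) / κ * ‖u‖ ^ 2 - 1 / κ * ‖u‖ ^ 2 = -(α / κ * ‖u‖ ^ 2) := by
        field_simp; ring
      linarith
    · have := hAub u
      have heq : (1 + α) / κ * ‖u‖ ^ 2 - 1 / κ * ‖u‖ ^ 2 = α / κ * ‖u‖ ^ 2 := by
        field_simp; ring
      linarith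
  have hBgk : ‖B gk‖ ≤ α / κ * ‖gk‖ :=
    my_sa_bound B hBsa (α / κ) (by positivity) hBbound gk
  -- xk1 - zk = -(B gk)
  have hx1z : xk1 - zk = -(B gk) := by
    have hBapp : B gk = A gk - (1 / κ) • gk := by
      simp [hBdef, ContinuousLinearMap.sub_apply]
    rw [hstep, hzk, hBapp]
    abel
  have hE : ‖xk1 - zk‖ ≤ α / κ * ‖gk‖ := by rw [hx1z, norm_neg]; exact hBgk
  have hE0 : (0:ℝ) ≤ ‖xk1 - zk‖ := norm_nonneg _
  -- descent lemma from zk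
  have hdes := my_descent F G hgrad κ hκ hsmooth zk xk1
  have hinner : (inner ℝ (G zk) (xk1 - zk) : ℝ) ≤ 13 / 6 * ‖gk‖ * (α / κ * ‖gk‖) := by
    calc (inner ℝ (G zk) (xk1 - zk) : ℝ) ≤ ‖G zk‖ * ‖xk1 - zk‖ := real_inner_le_norm _ _
      _ ≤ 13 / 6 * ‖gk‖ * (α / κ * ‖gk‖) := by
          apply mul_le_mul hGzk hE hE0 (by positivity)
  have hsq : κ / 2 * ‖xk1 - zk‖ ^ 2 ≤ κ / 2 * (α / κ * ‖gk‖) ^ 2 :=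
    mul_le_mul_of_nonneg_left (pow_le_pow_left₀ hE0 hE 2) (by positivity)
  have hFx1 : F xk1 ≤ F zk + (13 / 6 * α / κ + α ^ 2 / (2 * κ)) * ‖gk‖ ^ 2 := by
    have e1 : κ / 2 * (α / κ * ‖gk‖) ^ 2 = α ^ 2 / (2 * κ) * ‖gk‖ ^ 2 := by
      field_simp
    have e2 : 13 / 6 * ‖gk‖ * (α / κ * ‖gk‖) = 13 / 6 * α / κ * ‖gk‖ ^ 2 := by
      ring
    linarith [hdes]
  -- bound on ‖gk1‖
  have hGxk1 : ‖G xk1‖ ≤ (13 / 6 + α) * ‖gk‖ := by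
    have h1 : ‖G xk1 - G zk‖ ≤ κ * ‖xk1 - zk‖ := hsmooth xk1 zk
    have h2 : κ * ‖xk1 - zk‖ ≤ α * ‖gk‖ := by
      have := mul_le_mul_of_nonneg_left hE hκ.le
      have heq : κ * (α / κ * ‖gk‖) = α * ‖gk‖ := by field_simp
      linarith
    have h3 : ‖G xk1‖ ≤ ‖G zk‖ + ‖G xk1 - G zk‖ := by
      have h : G xk1 = G zk + (G xk1 - G zk) := by abel
      calc ‖G xk1‖ = ‖G zk + (G xk1 - G zk)‖ := by rw [← h]
        _ ≤ ‖G zk‖ + ‖G xk1 - G zk‖ := norm_add_le _ _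
    linarith
  have hδ1 : ‖gk1 - G xk1‖ ≤ ‖gk1‖ / 6 := by
    have h1 : ‖gk1 - G xk1‖ ^ 2 ≤ ‖gk1‖ ^ 2 / 36 := by
      have h2 : 2 * κ * εk1 ≤ 2 * κ * (1 / (72 * κ) * ‖gk1‖ ^ 2) := by nlinarith
      have h3 : 2 * κ * (1 / (72 * κ) * ‖gk1‖ ^ 2) = ‖gk1‖ ^ 2 / 36 := by
        field_simp; ring
      linarith [hgk1_err]
    nlinarith [norm_nonneg (gk1 - G xk1), norm_nonneg gk1]
  have hgk1n : ‖gk1‖ ≤ 211 / 80 * ‖gk‖ := by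
    have h1 : ‖gk1‖ ≤ ‖G xk1‖ + ‖gk1 - G xk1‖ := by
      have h : gk1 = G xk1 + (gk1 - G xk1) := by abel
      calc ‖gk1‖ = ‖G xk1 + (gk1 - G xk1)‖ := by rw [← h]
        _ ≤ ‖G xk1‖ + ‖gk1 - G xk1‖ := norm_add_le _ _
    have h2 : (13 / 6 + α) * ‖gk‖ ≤ (13 / 6 + 1 / 32) * ‖gk‖ := by nlinarith
    linarith
  have hεk1b : εk1 ≤ 44521 / 460800 * (1 / κ) * ‖gk‖ ^ 2 := by
    have h1 : ‖gk1‖ ^ 2 ≤ (211 / 80) ^ 2 * ‖gk‖ ^ 2 := by nlinarith [norm_nonneg gk1]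
    have h2 : εk1 ≤ 1 / (72 * κ) * ((211 / 80) ^ 2 * ‖gk‖ ^ 2) := by
      have : (0:ℝ) < 72 * κ := by positivity
      calc εk1 ≤ 1 / (72 * κ) * ‖gk1‖ ^ 2 := hεk1
        _ ≤ 1 / (72 * κ) * ((211 / 80) ^ 2 * ‖gk‖ ^ 2) := by
            apply mul_le_mul_of_nonneg_left h1 (by positivity)
    have h3 : 1 / (72 * κ) * ((211 / 80) ^ 2 * ‖gk‖ ^ 2)
        = 44521 / 460800 * (1 / κ) * ‖gk‖ ^ 2 := by field_simp; ring
    linarith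
  -- final combination
  have hfin : Fk1 ≤ Fk - 1 / (2 * κ) * ‖gk‖ ^ 2
      + (13 / 6 * α / κ + α ^ 2 / (2 * κ)) * ‖gk‖ ^ 2
      + 44521 / 460800 * (1 / κ) * ‖gk‖ ^ 2 := by linarith
  have h1 : 1 / (2 * κ) * ‖gk‖ ^ 2 - ((13 / 6 * α / κ + α ^ 2 / (2 * κ)) * ‖gk‖ ^ 2
      + 44521 / 460800 * (1 / κ) * ‖gk‖ ^ 2) ≥ 1 / (4 * κ) * ‖gk‖ ^ 2 := by
    have hg2 : (0:ℝ) ≤ ‖gk‖ ^ 2 := by positivity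
    have hiκ : (0:ℝ) < 1 / κ := by positivity
    have key : 13 / 6 * α + α ^ 2 / 2 + 44521 / 460800 ≤ 1 / 4 := by nlinarith
    have e1 : 1 / (2 * κ) * ‖gk‖ ^ 2 - ((13 / 6 * α / κ + α ^ 2 / (2 * κ)) * ‖gk‖ ^ 2
        + 44521 / 460800 * (1 / κ) * ‖gk‖ ^ 2)
        = (1 / 2 - (13 / 6 * α + α ^ 2 / 2 + 44521 / 460800)) * (1 / κ) * ‖gk‖ ^ 2 := by
      field_simp
    have e2 : 1 / (4 * κ) * ‖gk‖ ^ 2 = (1 / 4) * (1 / κ) * ‖gk‖ ^ 2 := by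
      field_simp
    rw [e1, e2]
    nlinarith
  linarith
end
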